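/- Suppose A ⊂ ℤ² contains at least one nearest neighbor of the origin. Then for all n ≥ 1, Es_n(A ∖ {0}) ≤ 4 · Es_n(A). -/

import Mathlib

open MeasureTheory ProbabilityTheory Filter Set
open scoped ENNReal

noncomputable section

/-- A lattice point viewed as a complex number. -/
def toC (x : ℤ × ℤ) : ℂ := (x.1 : ℂ) + (x.2 : ℂ) * Complex.I

/-- The Euclidean norm of a lattice point. -/
def latNorm (x : ℤ × ℤ) : ℝ := ‖toC x‖

/-- The discrete ball `C_m = {x ∈ ℤ² : |x| < m}`. -/
def discBall (m : ℝ) : Set (ℤ × ℤ) := {x | latNorm x < m}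

/-- The outer boundary `∂C_m = {x ∉ C_m : ∃ y ∈ C_m, |y - x| = 1}`. -/
def discBdry (m : ℝ) : Set (ℤ × ℤ) :=
  {x | x ∉ discBall m ∧ ∃ y ∈ discBall m, latNorm (y - x) = 1}

/-- The four unit lattice vectors. -/
def steps : Finset (ℤ × ℤ) := {(1, 0), (-1, 0), (0, 1), (0, -1)}

/-- The uniform distribution on the four unit lattice vectors. -/
def stepPMF : PMF (ℤ × ℤ) := PMF.uniformOfFinset steps ⟨(1, 0), by decide⟩

/-- `S` is a simple random walk on `ℤ²` under `P`, started at `x`: the increments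
`S (k+1) - S k` are independent and uniformly distributed on the four unit vectors. -/
def IsRWFrom {Ω : Type*} [MeasurableSpace Ω] (P : Measure Ω) (S : ℕ → Ω → ℤ × ℤ)
    (x : ℤ × ℤ) : Prop :=
  IsProbabilityMeasure P ∧ (∀ ω, S 0 ω = x) ∧ (∀ k, Measurable (S k)) ∧
    iIndepFun (fun k ω => S (k + 1) ω - S k ω) P ∧
    ∀ k, P.map (fun ω => S (k + 1) ω - S k ω) = stepPMF.toMeasure

/-- `S` is a simple random walk started at the origin. -/
def IsSRW {Ω : Type*} [MeasurableSpace Ω] (P : Measure Ω) (S : ℕ → Ω → ℤ × ℤ) : Prop :=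
  IsRWFrom P S 0

/-- `σ_m`, the first time the process is in `∂C_m` (with junk value `0` if there
is no such time). -/
def exitTime {Ω : Type*} (S : ℕ → Ω → ℤ × ℤ) (m : ℝ) (ω : Ω) : ℕ :=
  sInf {k | S k ω ∈ discBdry m}

/-- The path `[S 0, S 1, …, S j]` as a list. -/
def pathList {Ω : Type*} (S : ℕ → Ω → ℤ × ℤ) (j : ℕ) (ω : Ω) : List (ℤ × ℤ) :=
  (List.range (j + 1)).map fun i => S i ω

/-- The escape probability `Es_n(A)`: the probability that the walk reaches `∂C_n` without
hitting `A` at any positive time up to `σ_n`. -/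
def escProb {Ω : Type*} [MeasurableSpace Ω] (P : Measure Ω) (S : ℕ → Ω → ℤ × ℤ)
    (n : ℝ) (A : Set (ℤ × ℤ)) : ℝ≥0∞ :=
  P {ω | ∀ k, 1 ≤ k → k ≤ exitTime S n ω → S k ω ∉ A}

/-!
Encode paths by their words of increments. A path that escapes while avoiding `A ∖ {0}` either
never returns to the origin, and then it avoids `A ∪ {0}`, or it splits at its first return into a
first-return loop followed by another such escaping path. Path weights are probabilities of
disjoint cylinder events, and a first-return loop cannot start with the step to the neighbour
`a ∈ A`, so all of them together weigh at most `3/4`. Thus the escaping weight `x` satisfies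
`x ≤ y + (3/4) x`, where `y` is the escaping weight for `A ∪ {0}`; as `x ≤ 1`, `x ≤ 4 y`.
-/

lemma mem_steps_of_latNorm_eq_one {a : ℤ × ℤ} (h : latNorm a = 1) : a ∈ steps := by
  obtain ⟨x, y⟩ := a
  have hsq : x ^ 2 + y ^ 2 = 1 := by
    have hnorm := Complex.norm_add_mul_I (x : ℝ) y
    simp only [latNorm, toC, Complex.ofReal_intCast] at h hnorm
    rw [hnorm, Real.sqrt_eq_one] at h
    exact_mod_cast h
  have hx : -1 ≤ x ∧ x ≤ 1 := by constructor <;> nlinarith [sq_nonneg y]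
  have hy : -1 ≤ y ∧ y ≤ 1 := by constructor <;> nlinarith [sq_nonneg x]
  obtain ⟨hx0, hx1⟩ := hx
  obtain ⟨hy0, hy1⟩ := hy
  interval_cases x <;> interval_cases y <;> simp_all [steps]

lemma ne_zero_of_mem_steps {c : ℤ × ℤ} (hc : c ∈ steps) : c ≠ 0 := by
  rintro rfl
  exact absurd hc (by decide)

lemma stepPMF_apply_of_mem {c : ℤ × ℤ} (hc : c ∈ steps) : stepPMF c = 4⁻¹ :=
  PMF.uniformOfFinset_apply_of_mem (s := steps) (a := c) _ hc

lemma ENNReal.mul_le_of_le_add_one_sub_mul {x y q : ℝ≥0∞} (hx : x ≠ ⊤) (hq : q ≤ 1)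
    (h : x ≤ y + (1 - q) * x) : q * x ≤ y := by
  calc q * x = (1 - (1 - q)) * x := by rw [ENNReal.sub_sub_cancel ENNReal.one_ne_top hq]
    _ = x - (1 - q) * x := by rw [ENNReal.sub_mul fun _ _ => hx, one_mul]
    _ ≤ y := tsub_le_iff_right.2 h

section Words

variable {M : Type*} [AddMonoid M]

/-- A word `w` of increments encodes the path `i ↦ partialSum w i` from the origin. -/
def partialSum (w : List M) (i : ℕ) : M := (w.take i).sum

@[simp]
lemma partialSum_zero (w : List M) : partialSum w 0 = 0 := by simp [partialSum]

lemma partialSum_take (w : List M) {i L : ℕ} (h : i ≤ L) :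
    partialSum (w.take L) i = partialSum w i := by
  simp [partialSum, List.take_take, Nat.min_eq_left h]

lemma partialSum_succ {w : List M} {i : ℕ} (hi : i < w.length) :
    partialSum w (i + 1) = partialSum w i + w.getD i 0 := by
  rw [partialSum, partialSum, List.take_add_one, List.sum_append, List.getElem?_eq_getElem hi,
    List.getD_eq_getElem _ _ hi]
  simp

lemma partialSum_add (w : List M) (L i : ℕ) :
    partialSum w (L + i) = partialSum w L + partialSum (w.drop L) i := by
  simp [partialSum, List.take_add]

lemma List.IsPrefix.partialSum_eq {w w' : List M} (h : w <+: w') {i : ℕ} (hi : i ≤ w.length) :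
    partialSum w i = partialSum w' i := by
  rw [List.prefix_iff_eq_take.1 h, partialSum_take _ hi]

def PrefixFree {α : Type*} (W : Set (List α)) : Prop :=
  ∀ w ∈ W, ∀ w' ∈ W, w <+: w' → w = w'

def exitWords (D B : Set M) : Set (List M) :=
  {w | (∀ i < w.length, partialSum w i ∉ D) ∧ partialSum w w.length ∈ D ∧
    ∀ i, 1 ≤ i → i ≤ w.length → partialSum w i ∉ B}

def firstReturnWords (a : M) : Set (List M) :=
  {e | e ≠ [] ∧ partialSum e e.length = 0 ∧
    (∀ i, 0 < i → i < e.length → partialSum e i ≠ 0) ∧ partialSum e 1 ≠ a}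

lemma exitWords_anti {D B B' : Set M} (h : B ⊆ B') : exitWords D B' ⊆ exitWords D B :=
  fun _ ⟨hD, hend, hB⟩ => ⟨hD, hend, fun i h1 h2 hi => hB i h1 h2 (h hi)⟩

lemma prefixFree_exitWords (D B : Set M) : PrefixFree (exitWords D B) := by
  intro w hw w' hw' hpre
  refine hpre.eq_of_length (le_antisymm hpre.length_le (not_lt.1 fun hlt => ?_))
  exact hw'.1 w.length hlt (hpre.partialSum_eq le_rfl ▸ hw.2.1)

lemma prefixFree_firstReturnWords (a : M) : PrefixFree (firstReturnWords a) := by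
  intro e he e' he' hpre
  refine hpre.eq_of_length (le_antisymm hpre.length_le (not_lt.1 fun hlt => ?_))
  exact he'.2.2.1 e.length (List.length_pos_iff.2 he.1) hlt (hpre.partialSum_eq le_rfl ▸ he.2.1)

lemma exists_firstReturnWords_append {D B : Set M} {a : M} (ha : a ∈ B) {w : List M}
    (hw : w ∈ exitWords D B) (hvisit : ∃ i, 1 ≤ i ∧ i ≤ w.length ∧ partialSum w i = 0) :
    ∃ e ∈ firstReturnWords a, ∃ t ∈ exitWords D B, e ++ t = w := by
  classical
  obtain ⟨hD, hend, hB⟩ := hw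
  set m := Nat.find hvisit
  obtain ⟨hm1, hmlen, hm0⟩ : 1 ≤ m ∧ m ≤ w.length ∧ partialSum w m = 0 := Nat.find_spec hvisit
  have hmin (i : ℕ) (hi : 0 < i) (him : i < m) : partialSum w i ≠ 0 :=
    fun h0 => Nat.find_min hvisit him ⟨hi, by omega, h0⟩
  have hdrop (i : ℕ) : partialSum (w.drop m) i = partialSum w (m + i) := by
    rw [partialSum_add, hm0, zero_add]
  have htake_len : (w.take m).length = m := by simp [hmlen]
  have hdrop_len : (w.drop m).length = w.length - m := List.length_drop
  refine ⟨w.take m, ⟨?_, ?_, ?_, ?_⟩, w.drop m, ⟨?_, ?_, ?_⟩, w.take_append_drop m⟩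
  · exact List.ne_nil_of_length_pos (by omega)
  · rwa [htake_len, partialSum_take _ le_rfl]
  · intro i hi him
    rw [htake_len] at him
    rw [partialSum_take _ him.le]
    exact hmin i hi him
  · rw [partialSum_take _ hm1]
    exact fun h => hB 1 le_rfl (by omega) (h ▸ ha)
  · intro i hi
    rw [hdrop]
    exact hD _ (by omega)
  · rwa [hdrop, hdrop_len, Nat.add_sub_cancel' hmlen]
  · intro i hi1 hi
    rw [hdrop]
    exact hB _ (by omega) (by omega)

end Words

section Weights

def pathWeight (w : List (ℤ × ℤ)) : ℝ≥0∞ := (w.map stepPMF).prod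

def wordWeight (W : Set (List (ℤ × ℤ))) : ℝ≥0∞ := ∑' w : W, pathWeight w

lemma pathWeight_append (u v : List (ℤ × ℤ)) :
    pathWeight (u ++ v) = pathWeight u * pathWeight v := by
  simp [pathWeight]

lemma pathWeight_eq_prod_range (w : List (ℤ × ℤ)) :
    pathWeight w = ∏ i ∈ Finset.range w.length, stepPMF (w.getD i 0) := by
  induction w with
  | nil => simp [pathWeight]
  | cons c w ih =>
    rw [List.length_cons, Finset.prod_range_succ', ← List.singleton_append, pathWeight_append, ih]
    simp [pathWeight, mul_comm]

lemma wordWeight_mono {W V : Set (List (ℤ × ℤ))} (h : W ⊆ V) : wordWeight W ≤ wordWeight V :=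
  ENNReal.tsum_mono_subtype _ h

lemma wordWeight_union_le (W V : Set (List (ℤ × ℤ))) :
    wordWeight (W ∪ V) ≤ wordWeight W + wordWeight V :=
  ENNReal.tsum_union_le _ _ _

lemma wordWeight_le_mul_of_forall_exists_append {W U V : Set (List (ℤ × ℤ))}
    (h : ∀ w ∈ W, ∃ u ∈ U, ∃ v ∈ V, u ++ v = w) :
    wordWeight W ≤ wordWeight U * wordWeight V := by
  choose u hu v hv huv using h
  let φ : W → U × V := fun w => (⟨u w w.2, hu w w.2⟩, ⟨v w w.2, hv w w.2⟩)
  have hφ : Function.Injective φ := fun w w' h => Subtype.ext <| by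
    rw [← huv w w.2, ← huv w' w'.2]
    simp only [φ, Prod.mk.injEq, Subtype.mk.injEq] at h
    rw [h.1, h.2]
  calc wordWeight W = ∑' w : W, pathWeight (φ w).1 * pathWeight (φ w).2 :=
        tsum_congr fun w => by rw [← pathWeight_append, huv]
    _ ≤ ∑' p : U × V, pathWeight p.1 * pathWeight p.2 :=
        ENNReal.tsum_comp_le_tsum_of_injective hφ fun p : U × V => pathWeight p.1 * pathWeight p.2
    _ = wordWeight U * wordWeight V := by
        rw [ENNReal.tsum_prod (f := fun (u : U) (v : V) => pathWeight u * pathWeight v),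
          wordWeight, wordWeight, ← ENNReal.tsum_mul_right]
        simp_rw [ENNReal.tsum_mul_left]

lemma wordWeight_exitWords_le_add {D B : Set (ℤ × ℤ)} {a : ℤ × ℤ} (ha : a ∈ B) :
    wordWeight (exitWords D B) ≤ wordWeight (exitWords D (insert 0 B)) +
      wordWeight (firstReturnWords a) * wordWeight (exitWords D B) := by
  have hsplit : exitWords D B ⊆ exitWords D (insert 0 B) ∪
      {w ∈ exitWords D B | ∃ i, 1 ≤ i ∧ i ≤ w.length ∧ partialSum w i = 0} := by
    intro w hw
    by_cases hvisit : ∃ i, 1 ≤ i ∧ i ≤ w.length ∧ partialSum w i = 0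
    · exact Or.inr ⟨hw, hvisit⟩
    · push Not at hvisit
      refine Or.inl ⟨hw.1, hw.2.1, fun i h1 h2 => ?_⟩
      rintro (h0 | hB)
      exacts [hvisit i h1 h2 h0, hw.2.2 i h1 h2 hB]
  refine (wordWeight_mono hsplit).trans <| (wordWeight_union_le _ _).trans ?_
  gcongr
  exact wordWeight_le_mul_of_forall_exists_append fun w hw =>
    exists_firstReturnWords_append ha hw.1 hw.2

end Weights

section RandomWalk

variable {Ω : Type*} {S : ℕ → Ω → ℤ × ℤ}

def increment (S : ℕ → Ω → ℤ × ℤ) (k : ℕ) (ω : Ω) : ℤ × ℤ := S (k + 1) ω - S k ω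

def wordCylinder (S : ℕ → Ω → ℤ × ℤ) (w : List (ℤ × ℤ)) : Set Ω :=
  {ω | ∀ i < w.length, increment S i ω = w.getD i 0}

lemma mem_wordCylinder_increments (S : ℕ → Ω → ℤ × ℤ) (k : ℕ) (ω : Ω) :
    ω ∈ wordCylinder S ((List.range k).map fun i => increment S i ω) := by
  intro i hi
  simp_all

lemma eq_partialSum_of_mem_wordCylinder {w : List (ℤ × ℤ)} {ω : Ω} (h0 : S 0 ω = 0)
    (hω : ω ∈ wordCylinder S w) {i : ℕ} (hi : i ≤ w.length) : S i ω = partialSum w i := by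
  induction i with
  | zero => simpa using h0
  | succ i ih =>
    rw [partialSum_succ (by omega), ← ih (by omega), ← hω i (by omega), increment,
      add_sub_cancel]

lemma isPrefix_of_mem_wordCylinder {w w' : List (ℤ × ℤ)} {ω : Ω} (h : ω ∈ wordCylinder S w)
    (h' : ω ∈ wordCylinder S w') (hlen : w.length ≤ w'.length) : w <+: w' := by
  rw [List.prefix_iff_eq_take]
  refine List.ext_getElem (by simp [hlen]) fun i hi hi' => ?_
  have e := h i hi
  have e' := h' i (by omega)
  rw [List.getD_eq_getElem _ _ hi] at e
  rw [List.getD_eq_getElem _ _ (by omega)] at e'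
  rw [List.getElem_take, ← e, ← e']

lemma PrefixFree.pairwiseDisjoint_wordCylinder {W : Set (List (ℤ × ℤ))} (hW : PrefixFree W) :
    W.PairwiseDisjoint (wordCylinder S) := by
  intro w hw w' hw' hne
  refine Set.disjoint_left.2 fun ω h h' => hne ?_
  rcases le_total w.length w'.length with hlen | hlen
  · exact hW w hw w' hw' (isPrefix_of_mem_wordCylinder h h' hlen)
  · exact (hW w' hw' w hw (isPrefix_of_mem_wordCylinder h' h hlen)).symm

lemma wordCylinder_eq_biInter (S : ℕ → Ω → ℤ × ℤ) (w : List (ℤ × ℤ)) :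
    wordCylinder S w = ⋂ i ∈ Finset.range w.length, increment S i ⁻¹' {w.getD i 0} := by
  ext
  simp [wordCylinder]

variable [MeasurableSpace Ω] {P : Measure Ω}

lemma measurable_increment (hS : ∀ k, Measurable (S k)) (k : ℕ) : Measurable (increment S k) :=
  (hS (k + 1)).sub (hS k)

lemma measurableSet_wordCylinder (hS : ∀ k, Measurable (S k)) (w : List (ℤ × ℤ)) :
    MeasurableSet (wordCylinder S w) := by
  rw [wordCylinder_eq_biInter]
  exact .biInter (Set.to_countable _) fun i _ =>
    measurable_increment hS i (measurableSet_singleton _)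

lemma measure_increment_preimage_singleton (hS : IsSRW P S) (k : ℕ) (c : ℤ × ℤ) :
    P (increment S k ⁻¹' {c}) = stepPMF c := by
  rw [← Measure.map_apply (measurable_increment hS.2.2.1 k) (measurableSet_singleton c)]
  rw [show P.map (increment S k) = stepPMF.toMeasure from hS.2.2.2.2 k]
  exact PMF.toMeasure_apply_singleton _ _ (measurableSet_singleton c)

lemma measure_wordCylinder (hS : IsSRW P S) (w : List (ℤ × ℤ)) :
    P (wordCylinder S w) = pathWeight w := by
  have hind : iIndepFun (increment S) P := hS.2.2.2.1
  rw [wordCylinder_eq_biInter, iIndepFun_iff_measure_inter_preimage_eq_mul.1 hind _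
    fun i _ => measurableSet_singleton _, pathWeight_eq_prod_range]
  exact Finset.prod_congr rfl fun i _ => measure_increment_preimage_singleton hS i _

lemma measure_biUnion_wordCylinder (hS : IsSRW P S) {W : Set (List (ℤ × ℤ))} (hW : PrefixFree W) :
    P (⋃ w ∈ W, wordCylinder S w) = wordWeight W := by
  rw [measure_biUnion (Set.to_countable W) hW.pairwiseDisjoint_wordCylinder
    fun w _ => measurableSet_wordCylinder hS.2.2.1 w]
  exact tsum_congr fun w => measure_wordCylinder hS w

lemma wordWeight_le_measure (hS : IsSRW P S) {W : Set (List (ℤ × ℤ))} (hW : PrefixFree W)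
    {E : Set Ω} (hE : ∀ w ∈ W, wordCylinder S w ⊆ E) : wordWeight W ≤ P E :=
  measure_biUnion_wordCylinder hS hW ▸ measure_mono (Set.iUnion₂_subset hE)

end RandomWalk

section Escape

variable {Ω : Type*} {S : ℕ → Ω → ℤ × ℤ} {r : ℝ} {B : Set (ℤ × ℤ)}

lemma exitTime_eq_length {w : List (ℤ × ℤ)} {ω : Ω} (h0 : S 0 ω = 0)
    (hw : w ∈ exitWords (discBdry r) B) (hω : ω ∈ wordCylinder S w) :
    exitTime S r ω = w.length := by
  have hmem : w.length ∈ {k | S k ω ∈ discBdry r} := by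
    simpa [eq_partialSum_of_mem_wordCylinder h0 hω le_rfl] using hw.2.1
  refine le_antisymm (Nat.sInf_le hmem) (not_lt.1 fun hlt => hw.1 _ hlt ?_)
  rw [← eq_partialSum_of_mem_wordCylinder h0 hω hlt.le]
  exact Nat.sInf_mem ⟨_, hmem⟩

lemma increments_mem_exitWords {ω : Ω} (h0 : S 0 ω = 0) {k : ℕ} (hk : S k ω ∈ discBdry r)
    (hB : ∀ k, 1 ≤ k → k ≤ exitTime S r ω → S k ω ∉ B) :
    (List.range (exitTime S r ω)).map (fun i => increment S i ω) ∈ exitWords (discBdry r) B := by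
  set T := exitTime S r ω
  set w := (List.range T).map fun i => increment S i ω
  have hlen : w.length = T := by simp [w]
  have hpos (i : ℕ) (hi : i ≤ T) : partialSum w i = S i ω :=
    (eq_partialSum_of_mem_wordCylinder h0 (mem_wordCylinder_increments S T ω)
      (by simpa [w] using hi)).symm
  refine ⟨fun i hi => ?_, ?_, fun i h1 hi => ?_⟩ <;> rw [hlen] at *
  · rw [hpos i hi.le]
    exact Nat.notMem_of_lt_sInf hi
  · rw [hpos T le_rfl]
    exact Nat.sInf_mem (s := {k | S k ω ∈ discBdry r}) ⟨k, hk⟩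
  · rw [hpos i hi]
    exact hB i h1 hi

lemma escapeEvent_eq (h0 : ∀ ω, S 0 ω = 0) :
    {ω | ∀ k, 1 ≤ k → k ≤ exitTime S r ω → S k ω ∉ B} =
      {ω | ∀ k, S k ω ∉ discBdry r} ∪ ⋃ w ∈ exitWords (discBdry r) B, wordCylinder S w := by
  ext ω
  constructor
  · intro hB
    by_cases hnever : ∀ k, S k ω ∉ discBdry r
    · exact Or.inl hnever
    push Not at hnever
    obtain ⟨k, hk⟩ := hnever
    exact Or.inr (Set.mem_biUnion (increments_mem_exitWords (h0 ω) hk hB)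
      (mem_wordCylinder_increments S _ ω))
  · rintro (hnever | hω) k hk1 hk
    · have hempty : {k | S k ω ∈ discBdry r} = ∅ := Set.eq_empty_of_forall_notMem hnever
      rw [exitTime, hempty, Nat.sInf_empty] at hk
      omega
    · obtain ⟨w, hw, hω⟩ := Set.mem_iUnion₂.1 hω
      rw [exitTime_eq_length (h0 ω) hw hω] at hk
      rw [eq_partialSum_of_mem_wordCylinder (h0 ω) hω hk]
      exact hw.2.2 k hk1 hk

variable [MeasurableSpace Ω] {P : Measure Ω}

lemma escProb_eq (hS : IsSRW P S) (r : ℝ) (B : Set (ℤ × ℤ)) :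
    escProb P S r B =
      P {ω | ∀ k, S k ω ∉ discBdry r} + wordWeight (exitWords (discBdry r) B) := by
  have hdisj : Disjoint {ω | ∀ k, S k ω ∉ discBdry r}
      (⋃ w ∈ exitWords (discBdry r) B, wordCylinder S w) := by
    refine Set.disjoint_right.2 fun ω hω hnever => ?_
    obtain ⟨w, hw, hω⟩ := Set.mem_iUnion₂.1 hω
    exact hnever w.length (eq_partialSum_of_mem_wordCylinder (hS.2.1 ω) hω le_rfl ▸ hw.2.1)
  rw [escProb, escapeEvent_eq hS.2.1, measure_union hdisj (.biUnion (Set.to_countable _)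
    fun w _ => measurableSet_wordCylinder hS.2.2.1 w),
    measure_biUnion_wordCylinder hS (prefixFree_exitWords _ _)]

lemma wordWeight_firstReturnWords_le (hS : IsSRW P S) {a : ℤ × ℤ} (ha : a ∈ steps) :
    wordWeight (firstReturnWords a) ≤ 1 - 4⁻¹ := by
  have := hS.1
  calc wordWeight (firstReturnWords a) ≤ P (increment S 0 ⁻¹' {a}ᶜ) := by
        refine wordWeight_le_measure hS (prefixFree_firstReturnWords a) fun e he ω hω => ?_
        have h1 := eq_partialSum_of_mem_wordCylinder (hS.2.1 ω) hω
          (List.length_pos_iff.2 he.1 : 1 ≤ e.length)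
        simpa [increment, hS.2.1 ω, h1] using he.2.2.2
    _ = 1 - 4⁻¹ := by
        rw [Set.preimage_compl, prob_compl_eq_one_sub (measurable_increment hS.2.2.1 0
          (measurableSet_singleton a)), measure_increment_preimage_singleton hS,
          stepPMF_apply_of_mem ha]

lemma wordWeight_exitWords_le_four_mul (hS : IsSRW P S) (D : Set (ℤ × ℤ)) {a : ℤ × ℤ}
    (haB : a ∈ B) (ha : a ∈ steps) :
    wordWeight (exitWords D B) ≤ 4 * wordWeight (exitWords D (insert 0 B)) := by
  have := hS.1
  have hfin : wordWeight (exitWords D B) ≠ ⊤ :=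
    ne_top_of_le_ne_top (measure_ne_top P Set.univ)
      (wordWeight_le_measure hS (prefixFree_exitWords D B) fun _ _ => Set.subset_univ _)
  have hquarter := ENNReal.mul_le_of_le_add_one_sub_mul (q := 4⁻¹) hfin (by norm_num)
    ((wordWeight_exitWords_le_add haB).trans (by
      gcongr
      exact wordWeight_firstReturnWords_le hS ha))
  calc wordWeight (exitWords D B) = 4 * (4⁻¹ * wordWeight (exitWords D B)) := by
        rw [← mul_assoc, ENNReal.mul_inv_cancel (by norm_num) (by norm_num), one_mul]
    _ ≤ 4 * wordWeight (exitWords D (insert 0 B)) := by gcongr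

end Escape

/-- **Lemma 2.1.** If `A ⊆ ℤ²` contains at least one nearest neighbor of the origin, then
for all `n ≥ 1`, `Es_n(A ∖ {0}) ≤ 4 Es_n(A)`. -/
theorem escProb_remove_origin_le :
    ∀ (Ω : Type) [MeasurableSpace Ω], ∀ (P : Measure Ω) (S : ℕ → Ω → ℤ × ℤ),
      IsSRW P S → ∀ A : Set (ℤ × ℤ), (∃ a ∈ A, latNorm a = 1) → ∀ n : ℕ, 1 ≤ n →
        escProb P S n (A \ {0}) ≤ 4 * escProb P S n A := by
  intro Ω _ P S hS A ⟨a, haA, ha⟩ n _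
  have ha_steps := mem_steps_of_latNorm_eq_one ha
  have haB : a ∈ A \ {0} := ⟨haA, ne_zero_of_mem_steps ha_steps⟩
  rw [escProb_eq hS, escProb_eq hS, mul_add]
  gcongr
  · exact le_mul_of_one_le_left' (by norm_num)
  · refine (wordWeight_exitWords_le_four_mul hS _ haB ha_steps).trans ?_
    gcongr
    exact wordWeight_mono (exitWords_anti (Set.subset_insert_sdiff_singleton 0 A))
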